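/- Assume the orbit 𝒪 is finite. If a pair of 0-chains (γx, γy) is a pseudo-decoupling of (x,y), then (x,y) admits a decoupling in the orbit of the form (x,y) = γ̃x + γ̃y + α, where γ̃x = (1/|G_x|) Σ_{σ∈G_x} σ·γx, γ̃y = (1/|G_y|) Σ_{σ∈G_y} σ·γy, and α = (x,y) − γ̃x − γ̃y cancels decoupled fractions. -/
import Mathlib


open IntermediateField
open scoped BigOperators Classical

set_option synthInstance.maxHeartbeats 1000000
set_option maxHeartbeats 1600000

noncomputable section

namespace QuadrantWalk

variable {K : Type} [Field K] [Algebra ℂ K]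

/-- Evaluation of the step (Laurent) polynomial `S(X,Y) = ∑ w_{i,j} X^i Y^j`
    at a pair of elements of a field. -/
def stepEval (St : Finset (ℤ × ℤ)) (w : ℤ × ℤ → ℂ) (u v : K) : K :=
  ∑ p ∈ St, algebraMap ℂ K (w p) * u ^ p.1 * v ^ p.2

/-- The step polynomial involves both `X` and `Y`. -/
def NotUnivariate (St : Finset (ℤ × ℤ)) : Prop :=
  (∃ p ∈ St, ∃ q ∈ St, p.1 ≠ q.1) ∧ ∃ p ∈ St, ∃ q ∈ St, p.2 ≠ q.2

/-- The kernel polynomial `K̃(X,Y,t) = X^mx * Y^my * (1 - t·S(X,Y))` as an element of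
`ℂ[X,Y,t]`, with variables `0 ↦ X`, `1 ↦ Y`, `2 ↦ t`. -/
def kernelPoly (St : Finset (ℤ × ℤ)) (w : ℤ × ℤ → ℂ) (mx my : ℕ) :
    MvPolynomial (Fin 3) ℂ :=
  MvPolynomial.X 0 ^ mx * MvPolynomial.X 1 ^ my -
    MvPolynomial.X 2 *
      ∑ p ∈ St, MvPolynomial.C (w p) *
        MvPolynomial.X 0 ^ (p.1 + (mx : ℤ)).toNat *
        MvPolynomial.X 1 ^ (p.2 + (my : ℤ)).toNat

/-- `-mx` (resp. `-my`) is the smallest `X`-exponent (resp. `Y`-exponent) of the model. -/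
structure ExponentBounds (St : Finset (ℤ × ℤ)) (mx my : ℕ) : Prop where
  lowerX : ∀ p ∈ St, -(mx : ℤ) ≤ p.1
  lowerY : ∀ p ∈ St, -(my : ℤ) ≤ p.2
  attainX : ∃ p ∈ St, p.1 = -(mx : ℤ)
  attainY : ∃ p ∈ St, p.2 = -(my : ℤ)

/-- `x`-adjacency : equal first coordinates and equal values of `S`. -/
def XAdj (St : Finset (ℤ × ℤ)) (w : ℤ × ℤ → ℂ) (a b : K × K) : Prop :=
  a.1 = b.1 ∧ stepEval St w a.1 a.2 = stepEval St w b.1 b.2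

/-- `y`-adjacency : equal second coordinates and equal values of `S`. -/
def YAdj (St : Finset (ℤ × ℤ)) (w : ℤ × ℤ → ℂ) (a b : K × K) : Prop :=
  a.2 = b.2 ∧ stepEval St w a.1 a.2 = stepEval St w b.1 b.2

/-- Adjacency. -/
def Adj (St : Finset (ℤ × ℤ)) (w : ℤ × ℤ → ℂ) (a b : K × K) : Prop :=
  XAdj St w a b ∨ YAdj St w a b

/-- The orbit of the walk: the equivalence class of `(x,y)` under the
reflexive-transitive closure of adjacency. -/
def orbit (St : Finset (ℤ × ℤ)) (w : ℤ × ℤ → ℂ) (x y : K) : Set (K × K) :=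
  {a | Relation.ReflTransGen (Adj St w) (x, y) a}

/-- `k = ℂ(S(x,y))`. -/
def kF (St : Finset (ℤ × ℤ)) (w : ℤ × ℤ → ℂ) (x y : K) : IntermediateField ℂ K :=
  adjoin ℂ {stepEval St w x y}

/-- `k(x) = ℂ(x, S(x,y))`. -/
def kxF (St : Finset (ℤ × ℤ)) (w : ℤ × ℤ → ℂ) (x y : K) : IntermediateField ℂ K :=
  adjoin ℂ {x, stepEval St w x y}

/-- `k(y) = ℂ(y, S(x,y))`. -/
def kyF (St : Finset (ℤ × ℤ)) (w : ℤ × ℤ → ℂ) (x y : K) : IntermediateField ℂ K :=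
  adjoin ℂ {y, stepEval St w x y}

/-- `k(x,y) = ℂ(x,y)`. -/
def kxyF (x y : K) : IntermediateField ℂ K := adjoin ℂ {x, y}

/-- `k(𝒪)`: the subfield generated over `k` by all coordinates of the orbit. -/
def orbitF (St : Finset (ℤ × ℤ)) (w : ℤ × ℤ → ℂ) (x y : K) : IntermediateField ℂ K :=
  adjoin ℂ ({stepEval St w x y} ∪ {z | ∃ a ∈ orbit St w x y, z = a.1 ∨ z = a.2})

/-- The standing hypotheses: nonzero weights, a non-univariate step polynomial,
`x, y` algebraically independent over `ℂ`, and `𝕂` an algebraic closure of `ℂ(x,y)`. -/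
structure Setting (St : Finset (ℤ × ℤ)) (w : ℤ × ℤ → ℂ) (x y : K) : Prop where
  weight_ne : ∀ p ∈ St, w p ≠ 0
  notUniv : NotUnivariate St
  indep : AlgebraicIndependent ℂ ![x, y]
  algClosed : IsAlgClosed K
  algebraic : Algebra.IsAlgebraic (kxyF x y) K

lemma self_mem_orbit (St : Finset (ℤ × ℤ)) (w : ℤ × ℤ → ℂ) (x y : K) :
    (x, y) ∈ orbit St w x y := Relation.ReflTransGen.refl

lemma x_mem_orbitF (St : Finset (ℤ × ℤ)) (w : ℤ × ℤ → ℂ) (x y : K) :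
    x ∈ orbitF St w x y := by
  apply subset_adjoin
  exact Set.mem_union_right _ ⟨(x, y), self_mem_orbit St w x y, Or.inl rfl⟩

lemma y_mem_orbitF (St : Finset (ℤ × ℤ)) (w : ℤ × ℤ → ℂ) (x y : K) :
    y ∈ orbitF St w x y := by
  apply subset_adjoin
  exact Set.mem_union_right _ ⟨(x, y), self_mem_orbit St w x y, Or.inr rfl⟩

lemma S_mem_orbitF (St : Finset (ℤ × ℤ)) (w : ℤ × ℤ → ℂ) (x y : K) :
    stepEval St w x y ∈ orbitF St w x y := by
  apply subset_adjoin
  exact Set.mem_union_left _ rfl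

lemma x_mem_kxF (St : Finset (ℤ × ℤ)) (w : ℤ × ℤ → ℂ) (x y : K) :
    x ∈ kxF St w x y :=
  subset_adjoin ℂ _ (Set.mem_insert _ _)

lemma S_mem_kxF (St : Finset (ℤ × ℤ)) (w : ℤ × ℤ → ℂ) (x y : K) :
    stepEval St w x y ∈ kxF St w x y :=
  subset_adjoin ℂ _ (Set.mem_insert_of_mem _ rfl)

lemma y_mem_kyF (St : Finset (ℤ × ℤ)) (w : ℤ × ℤ → ℂ) (x y : K) :
    y ∈ kyF St w x y :=
  subset_adjoin ℂ _ (Set.mem_insert _ _)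

lemma S_mem_kyF (St : Finset (ℤ × ℤ)) (w : ℤ × ℤ → ℂ) (x y : K) :
    stepEval St w x y ∈ kyF St w x y :=
  subset_adjoin ℂ _ (Set.mem_insert_of_mem _ rfl)

/-- The subgroup of `ℂ`-automorphisms of `M` fixing the subfield `E` pointwise. -/
def fixingAuts (E M : IntermediateField ℂ K) : Subgroup (↥M ≃ₐ[ℂ] ↥M) where
  carrier := {σ | ∀ (z : K) (_ : z ∈ E) (hzM : z ∈ M), σ ⟨z, hzM⟩ = ⟨z, hzM⟩}
  one_mem' := fun _ _ _ => rfl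
  mul_mem' := by
    intro σ τ hσ hτ z hzE hzM
    show σ (τ ⟨z, hzM⟩) = ⟨z, hzM⟩
    rw [hτ z hzE hzM, hσ z hzE hzM]
  inv_mem' := by
    intro σ hσ z hzE hzM
    show σ.symm ⟨z, hzM⟩ = ⟨z, hzM⟩
    conv_lhs => rw [← hσ z hzE hzM]
    exact σ.symm_apply_apply _

/-- The Galois group `G_x = Gal(k(𝒪)|k(x))`. -/
def Gx (St : Finset (ℤ × ℤ)) (w : ℤ × ℤ → ℂ) (x y : K) :
    Subgroup (↥(orbitF St w x y) ≃ₐ[ℂ] ↥(orbitF St w x y)) :=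
  fixingAuts (kxF St w x y) (orbitF St w x y)

/-- The Galois group `G_y = Gal(k(𝒪)|k(y))`. -/
def Gy (St : Finset (ℤ × ℤ)) (w : ℤ × ℤ → ℂ) (x y : K) :
    Subgroup (↥(orbitF St w x y) ≃ₐ[ℂ] ↥(orbitF St w x y)) :=
  fixingAuts (kyF St w x y) (orbitF St w x y)

/-- The Galois group `G_{xy} = Gal(k(𝒪)|k(x,y))`. -/
def Gxy (St : Finset (ℤ × ℤ)) (w : ℤ × ℤ → ℂ) (x y : K) :
    Subgroup (↥(orbitF St w x y) ≃ₐ[ℂ] ↥(orbitF St w x y)) :=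
  fixingAuts (kxyF x y) (orbitF St w x y)

/-- Extend an automorphism of an intermediate field to a map on all of `K`
(by the identity outside). -/
def extendAut {M : IntermediateField ℂ K} (σ : ↥M ≃ₐ[ℂ] ↥M) (z : K) : K :=
  if h : z ∈ M then (σ ⟨z, h⟩ : K) else z

/-- The coordinate-wise action of an automorphism on a `0`-chain. -/
def actChain {M : IntermediateField ℂ K} (σ : ↥M ≃ₐ[ℂ] ↥M)
    (γ : (K × K) →₀ ℂ) : (K × K) →₀ ℂ :=
  Finsupp.mapDomain (Prod.map (extendAut σ) (extendAut σ)) γ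

/-- Evaluation of a polynomial `P(X,Y,t)` at `(u, v, 1/S(x,y))` for `(u,v) = a`. -/
def evalPt (St : Finset (ℤ × ℤ)) (w : ℤ × ℤ → ℂ) (x y : K)
    (P : MvPolynomial (Fin 3) ℂ) (a : K × K) : K :=
  MvPolynomial.aeval ![a.1, a.2, (stepEval St w x y)⁻¹] P

/-- Evaluation of a polynomial `P(X,Y,t)` at `(x, y, 1/S(x,y))`. -/
def evalXY (St : Finset (ℤ × ℤ)) (w : ℤ × ℤ → ℂ) (x y : K)
    (P : MvPolynomial (Fin 3) ℂ) : K :=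
  evalPt St w x y P (x, y)

/-- Evaluation of the fraction `A/B` at `(a.1, a.2, 1/S(x,y))`. -/
def fracEval (St : Finset (ℤ × ℤ)) (w : ℤ × ℤ → ℂ) (x y : K)
    (A B : MvPolynomial (Fin 3) ℂ) (a : K × K) : K :=
  evalPt St w x y A a / evalPt St w x y B a

/-- Evaluation (orbit sum) of the fraction `A/B` on a `0`-chain. -/
def chainEval (St : Finset (ℤ × ℤ)) (w : ℤ × ℤ → ℂ) (x y : K)
    (A B : MvPolynomial (Fin 3) ℂ) (γ : (K × K) →₀ ℂ) : K :=
  γ.sum fun a c => algebraMap ℂ K c * fracEval St w x y A B a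

/-- A `0`-chain cancels decoupled fractions: the orbit sum of every regular fraction
of the form `F(X,t) + G(Y,t)` on it vanishes. -/
def CancelsDecoupled (St : Finset (ℤ × ℤ)) (w : ℤ × ℤ → ℂ) (mx my : ℕ)
    (x y : K) (α : (K × K) →₀ ℂ) : Prop :=
  ∀ A₁ B₁ A₂ B₂ : MvPolynomial (Fin 3) ℂ,
    A₁ ∈ MvPolynomial.supported ℂ ({0, 2} : Set (Fin 3)) →
    B₁ ∈ MvPolynomial.supported ℂ ({0, 2} : Set (Fin 3)) →
    A₂ ∈ MvPolynomial.supported ℂ ({1, 2} : Set (Fin 3)) →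
    B₂ ∈ MvPolynomial.supported ℂ ({1, 2} : Set (Fin 3)) →
    ¬ kernelPoly St w mx my ∣ B₁ → ¬ kernelPoly St w mx my ∣ B₂ →
    (α.sum fun a c =>
      algebraMap ℂ K c * (fracEval St w x y A₁ B₁ a + fracEval St w x y A₂ B₂ a)) = 0

/-- The field of fractions `ℂ(X,Y,t)`. -/
abbrev FF : Type := FractionRing (MvPolynomial (Fin 3) ℂ)

/-- The inclusion of `ℂ[X,Y,t]` into `ℂ(X,Y,t)`. -/
def toFF (P : MvPolynomial (Fin 3) ℂ) : FF := algebraMap (MvPolynomial (Fin 3) ℂ) FF P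

/-- The regular fraction `A/B` admits a Galois decoupling:
`A/B = F + G + K̃·R` with `F ∈ ℂ(X,t)`, `G ∈ ℂ(Y,t)` and `R` regular. -/
def AdmitsDecoupling (St : Finset (ℤ × ℤ)) (w : ℤ × ℤ → ℂ) (mx my : ℕ)
    (A B : MvPolynomial (Fin 3) ℂ) : Prop :=
  ∃ F₁ F₂ G₁ G₂ R₁ R₂ : MvPolynomial (Fin 3) ℂ,
    F₁ ∈ MvPolynomial.supported ℂ ({0, 2} : Set (Fin 3)) ∧
    F₂ ∈ MvPolynomial.supported ℂ ({0, 2} : Set (Fin 3)) ∧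
    G₁ ∈ MvPolynomial.supported ℂ ({1, 2} : Set (Fin 3)) ∧
    G₂ ∈ MvPolynomial.supported ℂ ({1, 2} : Set (Fin 3)) ∧
    ¬ kernelPoly St w mx my ∣ F₂ ∧ ¬ kernelPoly St w mx my ∣ G₂ ∧
    ¬ kernelPoly St w mx my ∣ R₂ ∧
    toFF A / toFF B =
      toFF F₁ / toFF F₂ + toFF G₁ / toFF G₂ +
        toFF (kernelPoly St w mx my) * (toFF R₁ / toFF R₂)

/-- `(I, J) = (A/B, Cc/D)` is a pair of Galois invariants: `I - J = K̃·R` with `R` regular. -/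
def IsInvariantPair (St : Finset (ℤ × ℤ)) (w : ℤ × ℤ → ℂ) (mx my : ℕ)
    (A B Cc D : MvPolynomial (Fin 3) ℂ) : Prop :=
  ∃ R₁ R₂ : MvPolynomial (Fin 3) ℂ, ¬ kernelPoly St w mx my ∣ R₂ ∧
    toFF A / toFF B - toFF Cc / toFF D =
      toFF (kernelPoly St w mx my) * (toFF R₁ / toFF R₂)

/-- A constant pair of Galois invariants: both members are equivalent to a
common fraction `c ∈ ℂ(t)` modulo `K̃`. -/
def IsConstantPair (St : Finset (ℤ × ℤ)) (w : ℤ × ℤ → ℂ) (mx my : ℕ)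
    (A B Cc D : MvPolynomial (Fin 3) ℂ) : Prop :=
  IsInvariantPair St w mx my A B Cc D ∧
  ∃ c₁ c₂ : MvPolynomial (Fin 3) ℂ,
    c₁ ∈ MvPolynomial.supported ℂ ({2} : Set (Fin 3)) ∧
    c₂ ∈ MvPolynomial.supported ℂ ({2} : Set (Fin 3)) ∧ c₂ ≠ 0 ∧
    IsInvariantPair St w mx my A B c₁ c₂ ∧ IsInvariantPair St w mx my Cc D c₁ c₂

/-- `(γx, γy)` is a pseudo-decoupling of `(x,y)`. -/
def PseudoDecoupling (St : Finset (ℤ × ℤ)) (w : ℤ × ℤ → ℂ) (mx my : ℕ)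
    (x y : K) (γx γy : (K × K) →₀ ℂ) : Prop :=
  ∀ A B : MvPolynomial (Fin 3) ℂ, ¬ kernelPoly St w mx my ∣ B →
    AdmitsDecoupling St w mx my A B →
      fracEval St w x y A B (x, y) =
          chainEval St w x y A B γx + chainEval St w x y A B γy ∧
        chainEval St w x y A B γx ∈ kxF St w x y ∧
        chainEval St w x y A B γy ∈ kyF St w x y

/-- `(gx, gy, a)` is a decoupling of `(x,y)` in the orbit. -/
def IsDecoupling (St : Finset (ℤ × ℤ)) (w : ℤ × ℤ → ℂ) (mx my : ℕ)
    (x y : K) (gx gy a : (K × K) →₀ ℂ) : Prop :=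
  Finsupp.single (x, y) (1 : ℂ) = gx + gy + a ∧
  (∀ σ ∈ Gx St w x y, actChain σ gx = gx) ∧
  (∀ σ ∈ Gy St w x y, actChain σ gy = gy) ∧
  CancelsDecoupled St w mx my x y a

/-- The `x`-part of the boundary of a `1`-chain. -/
def boundaryX (St : Finset (ℤ × ℤ)) (w : ℤ × ℤ → ℂ)
    (c : ((K × K) × (K × K)) →₀ ℂ) : (K × K) →₀ ℂ :=
  c.sum fun e coeff =>
    if XAdj St w e.1 e.2 then
      coeff • (Finsupp.single e.2 (1 : ℂ) - Finsupp.single e.1 (1 : ℂ)) else 0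

/-- The `y`-part of the boundary of a `1`-chain. -/
def boundaryY (St : Finset (ℤ × ℤ)) (w : ℤ × ℤ → ℂ)
    (c : ((K × K) × (K × K)) →₀ ℂ) : (K × K) →₀ ℂ :=
  c.sum fun e coeff =>
    if YAdj St w e.1 e.2 then
      coeff • (Finsupp.single e.2 (1 : ℂ) - Finsupp.single e.1 (1 : ℂ)) else 0

/-- The `0`-chain induced by a bicolored loop. -/
def IsBicoloredChain (St : Finset (ℤ × ℤ)) (w : ℤ × ℤ → ℂ) (x y : K)
    (α : (K × K) →₀ ℂ) : Prop :=
  ∃ (n : ℕ) (b : ℕ → K × K), 0 < n ∧ b (2 * n) = b 0 ∧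
    (∀ j < 2 * n, b j ∈ orbit St w x y) ∧
    (∀ i < n, XAdj St w (b (2 * i)) (b (2 * i + 1)) ∧
      YAdj St w (b (2 * i + 1)) (b (2 * i + 2))) ∧
    α = ∑ j ∈ Finset.range (2 * n), ((-1 : ℂ) ^ (j + 1)) • Finsupp.single (b j) (1 : ℂ)

/-- The `0`-chain `ω = (1/|𝒪|) ∑_{a ∈ 𝒪} a`. -/
def omegaChain (St : Finset (ℤ × ℤ)) (w : ℤ × ℤ → ℂ) (x y : K)
    (h : (orbit St w x y).Finite) : (K × K) →₀ ℂ :=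
  ((h.toFinset.card : ℂ))⁻¹ • ∑ a ∈ h.toFinset, Finsupp.single a (1 : ℂ)

/-- The average `[G]·γ = (1/|G|) ∑_{σ ∈ G} σ·γ` of a `0`-chain under a group. -/
def groupAverage {M : IntermediateField ℂ K} (G : Subgroup (↥M ≃ₐ[ℂ] ↥M))
    (γ : (K × K) →₀ ℂ) : (K × K) →₀ ℂ :=
  ((Nat.card G : ℂ))⁻¹ • ∑ᶠ σ ∈ (G : Set (↥M ≃ₐ[ℂ] ↥M)), actChain σ γ

/-- `ℂ[X,t]` (two variables: `0` and `1`). -/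
abbrev MvP2 : Type := MvPolynomial (Fin 2) ℂ

/-- `ℂ(X,t)`, the fraction field of `ℂ[X,t]`. -/
abbrev CXt : Type := FractionRing MvP2

/-- Constants `ℂ → ℂ(X,t)`. -/
def cconst : ℂ →+* CXt := (algebraMap MvP2 CXt).comp (MvPolynomial.C)

/-- The first generator of `ℂ(X,t)`. -/
def gen0 : CXt := algebraMap MvP2 CXt (MvPolynomial.X 0)

/-- The second generator of `ℂ(X,t)`. -/
def gen1 : CXt := algebraMap MvP2 CXt (MvPolynomial.X 1)

/-- The kernel polynomial viewed as a polynomial in `Y` over `ℂ(X,t)`. -/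
def kernelInY (St : Finset (ℤ × ℤ)) (w : ℤ × ℤ → ℂ) (mx my : ℕ) :
    Polynomial CXt :=
  MvPolynomial.eval₂ ((Polynomial.C : CXt →+* Polynomial CXt).comp cconst)
    ![Polynomial.C gen0, Polynomial.X, Polynomial.C gen1]
    (kernelPoly St w mx my)

/-- The kernel polynomial viewed as a polynomial in `X` over `ℂ(Y,t)`. -/
def kernelInX (St : Finset (ℤ × ℤ)) (w : ℤ × ℤ → ℂ) (mx my : ℕ) :
    Polynomial CXt :=
  MvPolynomial.eval₂ ((Polynomial.C : CXt →+* Polynomial CXt).comp cconst)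
    ![Polynomial.X, Polynomial.C gen0, Polynomial.C gen1]
    (kernelPoly St w mx my)

/-- The kernel polynomial viewed as a polynomial in `X, Y` over `ℂ(t)`. -/
def kernelInXY (St : Finset (ℤ × ℤ)) (w : ℤ × ℤ → ℂ) (mx my : ℕ) :
    MvPolynomial (Fin 2) (RatFunc ℂ) :=
  MvPolynomial.eval₂
    ((MvPolynomial.C : RatFunc ℂ →+* MvPolynomial (Fin 2) (RatFunc ℂ)).comp
      (RatFunc.C : ℂ →+* RatFunc ℂ))
    ![MvPolynomial.X 0, MvPolynomial.X 1, MvPolynomial.C RatFunc.X]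
    (kernelPoly St w mx my)

/-- The specialization `K̃(x, Y, 1/S(x,y))` as a polynomial in `Y` over `k(x)`. -/
def kernelAtX (St : Finset (ℤ × ℤ)) (w : ℤ × ℤ → ℂ) (mx my : ℕ) (x y : K) :
    Polynomial ↥(kxF St w x y) :=
  MvPolynomial.aeval
    ![Polynomial.C (⟨x, x_mem_kxF St w x y⟩ : kxF St w x y), Polynomial.X,
      Polynomial.C (⟨(stepEval St w x y)⁻¹, inv_mem (S_mem_kxF St w x y)⟩ : kxF St w x y)]
    (kernelPoly St w mx my)

/-- The specialization `K̃(X, y, 1/S(x,y))` as a polynomial in `X` over `k(y)`. -/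
def kernelAtY (St : Finset (ℤ × ℤ)) (w : ℤ × ℤ → ℂ) (mx my : ℕ) (x y : K) :
    Polynomial ↥(kyF St w x y) :=
  MvPolynomial.aeval
    ![Polynomial.X, Polynomial.C (⟨y, y_mem_kyF St w x y⟩ : kyF St w x y),
      Polynomial.C (⟨(stepEval St w x y)⁻¹, inv_mem (S_mem_kyF St w x y)⟩ : kyF St w x y)]
    (kernelPoly St w mx my)

/-- Values of regular fractions with numerator and denominator supported on a set
of variables. -/
def regRange (St : Finset (ℤ × ℤ)) (w : ℤ × ℤ → ℂ) (x y : K) (mx my : ℕ)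
    (s : Set (Fin 3)) : Set K :=
  {z | ∃ A B : MvPolynomial (Fin 3) ℂ,
    A ∈ MvPolynomial.supported ℂ s ∧ B ∈ MvPolynomial.supported ℂ s ∧
    ¬ kernelPoly St w mx my ∣ B ∧ z = evalXY St w x y A / evalXY St w x y B}

end QuadrantWalk
namespace QuadrantWalk

section Aux17

variable {K : Type} [Field K] [Algebra ℂ K]
variable (St : Finset (ℤ × ℤ)) (w : ℤ × ℤ → ℂ) (x y : K)

lemma stepEval_algHom {L M : Type} [Field L] [Field M] [Algebra ℂ L] [Algebra ℂ M]
    {F : Type} [FunLike F L M] [AlgHomClass F ℂ L M] (f : F) (u v : L) :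
    f (stepEval St w u v) = stepEval St w (f u) (f v) := by
  simp [stepEval, map_sum, map_mul, map_zpow₀, AlgHomClass.commutes]

lemma kxF_le_orbitF : kxF St w x y ≤ orbitF St w x y := by
  rw [kxF, adjoin_le_iff]
  intro z hz
  simp only [Set.mem_insert_iff, Set.mem_singleton_iff] at hz
  rcases hz with hz | hz
  · rw [hz]; exact x_mem_orbitF St w x y
  · rw [hz]; exact S_mem_orbitF St w x y

lemma kyF_le_orbitF : kyF St w x y ≤ orbitF St w x y := by
  rw [kyF, adjoin_le_iff]
  intro z hz
  simp only [Set.mem_insert_iff, Set.mem_singleton_iff] at hz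
  rcases hz with hz | hz
  · rw [hz]; exact y_mem_orbitF St w x y
  · rw [hz]; exact S_mem_orbitF St w x y

lemma coords_mem {a : K × K} (ha : a ∈ orbit St w x y) :
    a.1 ∈ orbitF St w x y ∧ a.2 ∈ orbitF St w x y :=
  ⟨subset_adjoin _ _ (Set.mem_union_right _ ⟨a, ha, Or.inl rfl⟩),
   subset_adjoin _ _ (Set.mem_union_right _ ⟨a, ha, Or.inr rfl⟩)⟩

lemma stepEval_coe (u v : ↥(orbitF St w x y)) :
    ((stepEval St w u v : ↥(orbitF St w x y)) : K) = stepEval St w (u : K) (v : K) :=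
  stepEval_algHom St w (orbitF St w x y).val u v

lemma stepEval_mem {u v : K} (hu : u ∈ orbitF St w x y) (hv : v ∈ orbitF St w x y) :
    stepEval St w u v ∈ orbitF St w x y := by
  have h := stepEval_coe St w x y ⟨u, hu⟩ ⟨v, hv⟩
  rw [← h]
  exact SetLike.coe_mem _

lemma extendAut_mem {M : IntermediateField ℂ K} (σ : ↥M ≃ₐ[ℂ] ↥M) {z : K} (h : z ∈ M) :
    extendAut σ z = ↑(σ ⟨z, h⟩) := dif_pos h

lemma extendAut_mul {M : IntermediateField ℂ K} (σ τ : ↥M ≃ₐ[ℂ] ↥M) :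
    extendAut (σ * τ) = extendAut σ ∘ extendAut τ := by
  funext z
  by_cases h : z ∈ M
  · rw [Function.comp_apply, extendAut_mem _ h, extendAut_mem _ h,
      extendAut_mem σ (SetLike.coe_mem (τ ⟨z, h⟩)), AlgEquiv.mul_apply]
  · simp only [Function.comp_apply, extendAut, dif_neg h]

lemma actChain_mul {M : IntermediateField ℂ K} (σ τ : ↥M ≃ₐ[ℂ] ↥M) (γ : (K × K) →₀ ℂ) :
    actChain (σ * τ) γ = actChain σ (actChain τ γ) := by
  rw [actChain, actChain, actChain, extendAut_mul, ← Finsupp.mapDomain_comp]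
  congr 1

lemma stepEval_extendAut (σ : ↥(orbitF St w x y) ≃ₐ[ℂ] ↥(orbitF St w x y))
    {u v : K} (hu : u ∈ orbitF St w x y) (hv : v ∈ orbitF St w x y) :
    stepEval St w (extendAut σ u) (extendAut σ v) =
      ↑(σ ⟨stepEval St w u v, stepEval_mem St w x y hu hv⟩) := by
  have key : stepEval St w (σ ⟨u, hu⟩) (σ ⟨v, hv⟩) =
      σ ⟨stepEval St w u v, stepEval_mem St w x y hu hv⟩ := by
    rw [← stepEval_algHom St w σ]
    exact congrArg σ (Subtype.ext (stepEval_coe St w x y ⟨u, hu⟩ ⟨v, hv⟩))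
  rw [extendAut_mem _ hu, extendAut_mem _ hv, ← stepEval_coe, key]

lemma adj_extendAut (σ : ↥(orbitF St w x y) ≃ₐ[ℂ] ↥(orbitF St w x y))
    {a b : K × K} (ha : a ∈ orbit St w x y) (hb : b ∈ orbit St w x y)
    (h : Adj St w a b) :
    Adj St w (extendAut σ a.1, extendAut σ a.2) (extendAut σ b.1, extendAut σ b.2) := by
  obtain ⟨ha1, ha2⟩ := coords_mem St w x y ha
  obtain ⟨hb1, hb2⟩ := coords_mem St w x y hb
  have hSab : stepEval St w a.1 a.2 = stepEval St w b.1 b.2 := h.elim And.right And.right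
  have hstep : stepEval St w (extendAut σ a.1) (extendAut σ a.2) =
      stepEval St w (extendAut σ b.1) (extendAut σ b.2) := by
    rw [stepEval_extendAut St w x y σ ha1 ha2, stepEval_extendAut St w x y σ hb1 hb2]
    exact congrArg _ (congrArg σ (Subtype.ext hSab))
  rcases h with ⟨h1, _⟩ | ⟨h1, _⟩
  · exact Or.inl ⟨by simp only [XAdj]; rw [h1], hstep⟩
  · exact Or.inr ⟨by simp only [YAdj]; rw [h1], hstep⟩

lemma orbit_extendAut (σ : ↥(orbitF St w x y) ≃ₐ[ℂ] ↥(orbitF St w x y))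
    (hbase : (extendAut σ x, extendAut σ y) ∈ orbit St w x y)
    {a : K × K} (ha : a ∈ orbit St w x y) :
    (extendAut σ a.1, extendAut σ a.2) ∈ orbit St w x y := by
  have ha' : Relation.ReflTransGen (Adj St w) (x, y) a := ha
  induction ha' with
  | refl => exact hbase
  | @tail b c hb hadj ih =>
      exact Relation.ReflTransGen.tail (ih hb)
        (adj_extendAut St w x y σ hb (Relation.ReflTransGen.tail hb hadj) hadj)

lemma Gx_base {σ : ↥(orbitF St w x y) ≃ₐ[ℂ] ↥(orbitF St w x y)} (hσ : σ ∈ Gx St w x y) :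
    (extendAut σ x, extendAut σ y) ∈ orbit St w x y := by
  have hx : extendAut σ x = x := by
    rw [extendAut_mem σ (x_mem_orbitF St w x y),
      hσ x (x_mem_kxF St w x y) (x_mem_orbitF St w x y)]
  have hS : stepEval St w (extendAut σ x) (extendAut σ y) = stepEval St w x y := by
    rw [stepEval_extendAut St w x y σ (x_mem_orbitF St w x y) (y_mem_orbitF St w x y),
      hσ _ (S_mem_kxF St w x y) _]
  rw [hx] at hS ⊢
  exact Relation.ReflTransGen.single (Or.inl ⟨rfl, hS.symm⟩)

lemma Gy_base {σ : ↥(orbitF St w x y) ≃ₐ[ℂ] ↥(orbitF St w x y)} (hσ : σ ∈ Gy St w x y) :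
    (extendAut σ x, extendAut σ y) ∈ orbit St w x y := by
  have hy : extendAut σ y = y := by
    rw [extendAut_mem σ (y_mem_orbitF St w x y),
      hσ y (y_mem_kyF St w x y) (y_mem_orbitF St w x y)]
  have hS : stepEval St w (extendAut σ x) (extendAut σ y) = stepEval St w x y := by
    rw [stepEval_extendAut St w x y σ (x_mem_orbitF St w x y) (y_mem_orbitF St w x y),
      hσ _ (S_mem_kyF St w x y) _]
  rw [hy] at hS ⊢
  exact Relation.ReflTransGen.single (Or.inr ⟨rfl, hS.symm⟩)

lemma adjoin_coe_top {S : Set K} (z : ↥(adjoin ℂ S)) :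
    z ∈ adjoin ℂ {u : ↥(adjoin ℂ S) | (u : K) ∈ S} := by
  have himg : (adjoin ℂ S).val '' {u : ↥(adjoin ℂ S) | (u : K) ∈ S} = S := by
    ext u
    constructor
    · rintro ⟨v, hv, rfl⟩; exact hv
    · intro hu; exact ⟨⟨u, subset_adjoin ℂ S hu⟩, hu, rfl⟩
  have hmap := IntermediateField.adjoin_map ℂ {u : ↥(adjoin ℂ S) | (u : K) ∈ S}
      (adjoin ℂ S).val
  rw [himg] at hmap
  have hz : (z : K) ∈
      IntermediateField.map (adjoin ℂ S).val
        (adjoin ℂ {u : ↥(adjoin ℂ S) | (u : K) ∈ S}) := by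
    rw [hmap]; exact z.2
  rw [← SetLike.mem_coe, IntermediateField.coe_map] at hz
  obtain ⟨v, hv, hveq⟩ := hz
  have hvz : v = z := Subtype.ext hveq
  rwa [hvz] at hv

/-- The equalizer of two automorphisms, as an intermediate field. -/
def autFix {L : Type} [Field L] [Algebra ℂ L] (σ τ : L ≃ₐ[ℂ] L) :
    IntermediateField ℂ L where
  carrier := {z | σ z = τ z}
  mul_mem' := fun ha hb => by
    simp only [Set.mem_setOf_eq, map_mul] at *; rw [ha, hb]
  one_mem' := by simp only [Set.mem_setOf_eq, map_one]
  add_mem' := fun ha hb => by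
    simp only [Set.mem_setOf_eq, map_add] at *; rw [ha, hb]
  zero_mem' := by simp only [Set.mem_setOf_eq, map_zero]
  algebraMap_mem' := fun c => by simp only [Set.mem_setOf_eq, AlgEquiv.commutes]
  inv_mem' := fun z hz => by
    simp only [Set.mem_setOf_eq, map_inv₀] at *; rw [hz]

lemma aut_ext {σ τ : ↥(orbitF St w x y) ≃ₐ[ℂ] ↥(orbitF St w x y)}
    (hS : ∀ h : stepEval St w x y ∈ orbitF St w x y,
      σ ⟨stepEval St w x y, h⟩ = τ ⟨stepEval St w x y, h⟩)
    (hc : ∀ a ∈ orbit St w x y, ∀ (h1 : a.1 ∈ orbitF St w x y)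
        (h2 : a.2 ∈ orbitF St w x y),
        σ ⟨a.1, h1⟩ = τ ⟨a.1, h1⟩ ∧ σ ⟨a.2, h2⟩ = τ ⟨a.2, h2⟩) :
    σ = τ := by
  apply AlgEquiv.ext
  intro z
  have hz := adjoin_coe_top
    (S := {stepEval St w x y} ∪ {z : K | ∃ a ∈ orbit St w x y, z = a.1 ∨ z = a.2}) z
  have hle : adjoin ℂ {u : ↥(orbitF St w x y) |
      (u : K) ∈ {stepEval St w x y} ∪ {z : K | ∃ a ∈ orbit St w x y, z = a.1 ∨ z = a.2}} ≤
      autFix σ τ := by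
    rw [adjoin_le_iff]
    rintro u hu
    rcases hu with hu | ⟨a, ha, hu⟩
    · have : u = ⟨stepEval St w x y, S_mem_orbitF St w x y⟩ := Subtype.ext hu
      show σ u = τ u
      rw [this]
      exact hS _
    · rcases hu with hu | hu
      · have h1 : a.1 ∈ orbitF St w x y := (coords_mem St w x y ha).1
        have : u = ⟨a.1, h1⟩ := Subtype.ext hu
        show σ u = τ u
        rw [this]
        exact (hc a ha h1 (coords_mem St w x y ha).2).1
      · have h2 : a.2 ∈ orbitF St w x y := (coords_mem St w x y ha).2
        have : u = ⟨a.2, h2⟩ := Subtype.ext hu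
        show σ u = τ u
        rw [this]
        exact (hc a ha (coords_mem St w x y ha).1 h2).2
  exact hle hz

lemma finite_fixing (hfin : (orbit St w x y).Finite) (E : IntermediateField ℂ K)
    (hSE : stepEval St w x y ∈ E)
    (hbase : ∀ σ ∈ fixingAuts E (orbitF St w x y),
      (extendAut σ x, extendAut σ y) ∈ orbit St w x y) :
    Finite ↥(fixingAuts E (orbitF St w x y)) := by
  let F : ↥(fixingAuts E (orbitF St w x y)) → (↥hfin.toFinset → ↥hfin.toFinset) :=
    fun σ a =>
      ⟨(extendAut σ.1 a.1.1, extendAut σ.1 a.1.2), by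
        rw [Set.Finite.mem_toFinset]
        exact orbit_extendAut St w x y σ.1 (hbase σ.1 σ.2)
          (hfin.mem_toFinset.mp a.2)⟩
  apply Finite.of_injective F
  intro σ τ h
  apply Subtype.ext
  apply aut_ext St w x y
  · intro hmem
    rw [σ.2 _ hSE hmem, τ.2 _ hSE hmem]
  · intro a ha h1 h2
    have ha' : a ∈ hfin.toFinset := hfin.mem_toFinset.mpr ha
    have hfa := congrFun h ⟨a, ha'⟩
    rw [Subtype.ext_iff, Prod.ext_iff] at hfa
    obtain ⟨hfa1, hfa2⟩ := hfa
    constructor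
    · apply Subtype.ext
      have e1 := extendAut_mem σ.1 h1
      have e2 := extendAut_mem τ.1 h1
      rw [← e1, ← e2]
      exact hfa1
    · apply Subtype.ext
      have e1 := extendAut_mem σ.1 h2
      have e2 := extendAut_mem τ.1 h2
      rw [← e1, ← e2]
      exact hfa2

lemma finite_Gx (hfin : (orbit St w x y).Finite) : Finite ↥(Gx St w x y) :=
  finite_fixing St w x y hfin (kxF St w x y) (S_mem_kxF St w x y)
    (fun _ hσ => Gx_base St w x y hσ)

lemma finite_Gy (hfin : (orbit St w x y).Finite) : Finite ↥(Gy St w x y) :=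
  finite_fixing St w x y hfin (kyF St w x y) (S_mem_kyF St w x y)
    (fun _ hσ => Gy_base St w x y hσ)

/-- Evaluation of a polynomial at an orbit point, inside the orbit field. -/
def evalOF (A : MvPolynomial (Fin 3) ℂ) (a : K × K) : ↥(orbitF St w x y) :=
  if h : a.1 ∈ orbitF St w x y ∧ a.2 ∈ orbitF St w x y then
    MvPolynomial.aeval
      ![⟨a.1, h.1⟩, ⟨a.2, h.2⟩,
        ⟨(stepEval St w x y)⁻¹, inv_mem (S_mem_orbitF St w x y)⟩] A
  else 0

lemma evalOF_coe (A : MvPolynomial (Fin 3) ℂ) {a : K × K}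
    (h1 : a.1 ∈ orbitF St w x y) (h2 : a.2 ∈ orbitF St w x y) :
    ((evalOF St w x y A a : ↥(orbitF St w x y)) : K) = evalPt St w x y A a := by
  rw [evalOF, dif_pos (⟨h1, h2⟩ : _ ∧ _), evalPt]
  have h := MvPolynomial.comp_aeval_apply (orbitF St w x y).val A
    (f := ![⟨a.1, h1⟩, ⟨a.2, h2⟩,
      ⟨(stepEval St w x y)⁻¹, inv_mem (S_mem_orbitF St w x y)⟩])
  refine h.trans ?_
  have hvec : (fun i => (orbitF St w x y).val
      (![⟨a.1, h1⟩, ⟨a.2, h2⟩,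
        ⟨(stepEval St w x y)⁻¹, inv_mem (S_mem_orbitF St w x y)⟩] i)) =
      ![a.1, a.2, (stepEval St w x y)⁻¹] := by
    funext i
    fin_cases i <;> rfl
  rw [hvec]

lemma evalOF_map_coe (A : MvPolynomial (Fin 3) ℂ)
    (σ : ↥(orbitF St w x y) ≃ₐ[ℂ] ↥(orbitF St w x y))
    (hσS : σ ⟨(stepEval St w x y)⁻¹, inv_mem (S_mem_orbitF St w x y)⟩ =
      ⟨(stepEval St w x y)⁻¹, inv_mem (S_mem_orbitF St w x y)⟩)
    {a : K × K} (h1 : a.1 ∈ orbitF St w x y) (h2 : a.2 ∈ orbitF St w x y) :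
    ((σ (evalOF St w x y A a) : ↥(orbitF St w x y)) : K) =
      evalPt St w x y A (extendAut σ a.1, extendAut σ a.2) := by
  rw [evalOF, dif_pos (⟨h1, h2⟩ : _ ∧ _), evalPt]
  have h := MvPolynomial.comp_aeval_apply
      ((orbitF St w x y).val.comp σ.toAlgHom) A
      (f := ![⟨a.1, h1⟩, ⟨a.2, h2⟩,
        ⟨(stepEval St w x y)⁻¹, inv_mem (S_mem_orbitF St w x y)⟩])
  refine h.trans ?_
  have hvec : (fun i => ((orbitF St w x y).val.comp σ.toAlgHom)
      (![⟨a.1, h1⟩, ⟨a.2, h2⟩,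
        ⟨(stepEval St w x y)⁻¹, inv_mem (S_mem_orbitF St w x y)⟩] i)) =
      ![extendAut σ a.1, extendAut σ a.2, (stepEval St w x y)⁻¹] := by
    funext i
    fin_cases i
    · exact (extendAut_mem σ h1).symm
    · exact (extendAut_mem σ h2).symm
    · exact congrArg Subtype.val hσS
  rw [hvec]

/-- The fraction `A/B` evaluated inside the orbit field. -/
def fracOF (A B : MvPolynomial (Fin 3) ℂ) (a : K × K) : ↥(orbitF St w x y) :=
  evalOF St w x y A a / evalOF St w x y B a

lemma fracOF_coe (A B : MvPolynomial (Fin 3) ℂ) {a : K × K}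
    (h1 : a.1 ∈ orbitF St w x y) (h2 : a.2 ∈ orbitF St w x y) :
    ((fracOF St w x y A B a : ↥(orbitF St w x y)) : K) = fracEval St w x y A B a := by
  rw [fracOF, fracEval]
  have h := map_div₀ ((orbitF St w x y).val) (evalOF St w x y A a) (evalOF St w x y B a)
  refine h.trans ?_
  exact congrArg₂ HDiv.hDiv (evalOF_coe St w x y A h1 h2) (evalOF_coe St w x y B h1 h2)

/-- The chain evaluation inside the orbit field. -/
def chainOF (A B : MvPolynomial (Fin 3) ℂ) (γ : (K × K) →₀ ℂ) : ↥(orbitF St w x y) :=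
  γ.sum fun a c => algebraMap ℂ ↥(orbitF St w x y) c * fracOF St w x y A B a

lemma chainOF_coe (A B : MvPolynomial (Fin 3) ℂ) (γ : (K × K) →₀ ℂ)
    (hγ : ↑γ.support ⊆ orbit St w x y) :
    ((chainOF St w x y A B γ : ↥(orbitF St w x y)) : K) = chainEval St w x y A B γ := by
  have h := map_finsuppSum (orbitF St w x y).val γ
    (fun a c => algebraMap ℂ ↥(orbitF St w x y) c * fracOF St w x y A B a)
  rw [chainEval]
  refine h.trans ?_
  apply Finsupp.sum_congr
  intro a ha
  obtain ⟨h1, h2⟩ := coords_mem St w x y (hγ ha)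
  rw [map_mul, AlgHom.commutes]
  congr 1
  exact fracOF_coe St w x y A B h1 h2

lemma chainEval_eq (A B : MvPolynomial (Fin 3) ℂ) (γ : (K × K) →₀ ℂ) :
    chainEval St w x y A B γ =
      Finsupp.linearCombination ℂ (fracEval St w x y A B) γ := by
  rw [chainEval, Finsupp.linearCombination_apply]
  exact Finsupp.sum_congr fun a _ => (Algebra.smul_def _ _).symm

lemma chainEval_actChain (A B : MvPolynomial (Fin 3) ℂ)
    (σ : ↥(orbitF St w x y) ≃ₐ[ℂ] ↥(orbitF St w x y))
    (hσS : σ ⟨(stepEval St w x y)⁻¹, inv_mem (S_mem_orbitF St w x y)⟩ =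
      ⟨(stepEval St w x y)⁻¹, inv_mem (S_mem_orbitF St w x y)⟩)
    (γ : (K × K) →₀ ℂ) (hγ : ↑γ.support ⊆ orbit St w x y) :
    chainEval St w x y A B (actChain σ γ) =
      ((σ (chainOF St w x y A B γ) : ↥(orbitF St w x y)) : K) := by
  rw [actChain, chainEval]
  rw [Finsupp.sum_mapDomain_index
      (fun b => by rw [map_zero, zero_mul])
      (fun b m1 m2 => by rw [map_add, add_mul])]
  have hσc := map_finsuppSum σ γ
    (fun a c => algebraMap ℂ ↥(orbitF St w x y) c * fracOF St w x y A B a)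
  have hval := map_finsuppSum (orbitF St w x y).val γ
    (fun a c => σ (algebraMap ℂ ↥(orbitF St w x y) c * fracOF St w x y A B a))
  have hgoal : (γ.sum fun a c => algebraMap ℂ K c *
      fracEval St w x y A B (Prod.map (extendAut σ) (extendAut σ) a)) =
      γ.sum fun a c =>
        (orbitF St w x y).val (σ (algebraMap ℂ ↥(orbitF St w x y) c *
          fracOF St w x y A B a)) := by
    apply Finsupp.sum_congr
    intro a ha
    obtain ⟨h1, h2⟩ := coords_mem St w x y (hγ ha)
    have g1 : extendAut σ a.1 ∈ orbitF St w x y := by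
      rw [extendAut_mem σ h1]; exact SetLike.coe_mem _
    have g2 : extendAut σ a.2 ∈ orbitF St w x y := by
      rw [extendAut_mem σ h2]; exact SetLike.coe_mem _
    have e1 := evalOF_map_coe St w x y A σ hσS h1 h2
    have e2 := evalOF_map_coe St w x y B σ hσS h1 h2
    rw [map_mul, AlgEquiv.commutes, map_mul, AlgHom.commutes]
    congr 1
    have : (orbitF St w x y).val (σ (fracOF St w x y A B a)) =
        ((σ (evalOF St w x y A a) : ↥(orbitF St w x y)) : K) /
          ((σ (evalOF St w x y B a) : ↥(orbitF St w x y)) : K) := by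
      rw [fracOF, map_div₀, map_div₀]
      rfl
    rw [this, e1, e2]
    rfl
  rw [hgoal]
  refine Eq.trans ?_ (congrArg _ hσc.symm)
  exact hval.symm

lemma chainEval_fix (A B : MvPolynomial (Fin 3) ℂ)
    {E : IntermediateField ℂ K} (hEle : E ≤ orbitF St w x y)
    {σ : ↥(orbitF St w x y) ≃ₐ[ℂ] ↥(orbitF St w x y)}
    (hσ : σ ∈ fixingAuts E (orbitF St w x y))
    (hSinv : (stepEval St w x y)⁻¹ ∈ E)
    (γ : (K × K) →₀ ℂ) (hγ : ↑γ.support ⊆ orbit St w x y)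
    (hval : chainEval St w x y A B γ ∈ E) :
    chainEval St w x y A B (actChain σ γ) = chainEval St w x y A B γ := by
  have hσS : σ ⟨(stepEval St w x y)⁻¹, inv_mem (S_mem_orbitF St w x y)⟩ =
      ⟨(stepEval St w x y)⁻¹, inv_mem (S_mem_orbitF St w x y)⟩ :=
    hσ _ hSinv _
  rw [chainEval_actChain St w x y A B σ hσS γ hγ]
  have hmem : chainEval St w x y A B γ ∈ orbitF St w x y := hEle hval
  have hchain : chainOF St w x y A B γ = ⟨chainEval St w x y A B γ, hmem⟩ :=
    Subtype.ext (chainOF_coe St w x y A B γ hγ)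
  rw [hchain, hσ _ hval hmem]

lemma chainEval_groupAverage (A B : MvPolynomial (Fin 3) ℂ)
    (G : Subgroup (↥(orbitF St w x y) ≃ₐ[ℂ] ↥(orbitF St w x y)))
    (hGfin : Finite ↥G) (γ : (K × K) →₀ ℂ)
    (hfix : ∀ σ ∈ G, chainEval St w x y A B (actChain σ γ) =
      chainEval St w x y A B γ) :
    chainEval St w x y A B (groupAverage G γ) = chainEval St w x y A B γ := by
  haveI := hGfin
  haveI : Finite ↥(G : Set (↥(orbitF St w x y) ≃ₐ[ℂ] ↥(orbitF St w x y))) := hGfin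
  have hsfin : (G : Set (↥(orbitF St w x y) ≃ₐ[ℂ] ↥(orbitF St w x y))).Finite :=
    Set.toFinite _
  rw [groupAverage, finsum_mem_eq_finite_toFinset_sum _ hsfin]
  rw [chainEval_eq, map_smul, map_sum]
  have hterm : ∀ σ ∈ hsfin.toFinset,
      Finsupp.linearCombination ℂ (fracEval St w x y A B) (actChain σ γ) =
        chainEval St w x y A B γ := by
    intro σ hσ
    rw [← chainEval_eq]
    exact hfix σ (hsfin.mem_toFinset.mp hσ)
  rw [Finset.sum_congr rfl hterm, Finset.sum_const]
  have hcard : hsfin.toFinset.card = Nat.card ↥G := by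
    rw [← Set.ncard_eq_toFinset_card _ hsfin, ← Nat.card_coe_set_eq]
    rfl
  rw [hcard, ← Nat.cast_smul_eq_nsmul ℂ, smul_smul, inv_mul_cancel₀, one_smul]
  exact Nat.cast_ne_zero.mpr Nat.card_pos.ne'

lemma actChain_groupAverage
    (G : Subgroup (↥(orbitF St w x y) ≃ₐ[ℂ] ↥(orbitF St w x y)))
    (hGfin : Finite ↥G)
    {σ : ↥(orbitF St w x y) ≃ₐ[ℂ] ↥(orbitF St w x y)} (hσ : σ ∈ G)
    (γ : (K × K) →₀ ℂ) :
    actChain σ (groupAverage G γ) = groupAverage G γ := by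
  haveI : Finite ↥(G : Set (↥(orbitF St w x y) ≃ₐ[ℂ] ↥(orbitF St w x y))) := hGfin
  have hsfin : (G : Set (↥(orbitF St w x y) ≃ₐ[ℂ] ↥(orbitF St w x y))).Finite :=
    Set.toFinite _
  rw [groupAverage, finsum_mem_eq_finite_toFinset_sum _ hsfin]
  rw [actChain, Finsupp.mapDomain_smul, Finsupp.mapDomain_finset_sum]
  congr 1
  have hstep : ∀ τ ∈ hsfin.toFinset,
      Finsupp.mapDomain (Prod.map (extendAut σ) (extendAut σ)) (actChain τ γ) =
        actChain (σ * τ) γ := by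
    intro τ _
    rw [actChain_mul]
    rfl
  rw [Finset.sum_congr rfl hstep]
  refine Finset.sum_bij' (fun τ _ => σ * τ) (fun τ _ => σ⁻¹ * τ) ?_ ?_ ?_ ?_ ?_
  · intro τ hτ
    rw [Set.Finite.mem_toFinset] at *
    exact G.mul_mem hσ hτ
  · intro τ hτ
    rw [Set.Finite.mem_toFinset] at *
    exact G.mul_mem (G.inv_mem hσ) hτ
  · intro τ _
    exact inv_mul_cancel_left σ τ
  · intro τ _
    exact mul_inv_cancel_left σ τ
  · intro τ _
    rfl

lemma St_nonempty (hset : Setting St w x y) : ∃ p, p ∈ St := by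
  obtain ⟨⟨p, hp, _⟩, _⟩ := hset.notUniv
  exact ⟨p, hp⟩

lemma kernelPoly_not_dvd_one (mx my : ℕ) (hset : Setting St w x y)
    (hb : ExponentBounds St mx my) : ¬ kernelPoly St w mx my ∣ 1 := by
  intro hdvd
  have hunit : IsUnit (kernelPoly St w mx my) := isUnit_of_dvd_one hdvd
  obtain ⟨p₀, hp₀⟩ := St_nonempty St w x y hset
  have hmono : ∀ p ∈ St,
      MvPolynomial.C (w p) * MvPolynomial.X (0 : Fin 3) ^ (p.1 + (mx : ℤ)).toNat *
        MvPolynomial.X (1 : Fin 3) ^ (p.2 + (my : ℤ)).toNat =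
      MvPolynomial.monomial
        (Finsupp.single (0 : Fin 3) (p.1 + (mx : ℤ)).toNat +
          Finsupp.single (1 : Fin 3) (p.2 + (my : ℤ)).toNat) (w p) := by
    intro p _
    rw [MvPolynomial.X_pow_eq_monomial, MvPolynomial.X_pow_eq_monomial,
      MvPolynomial.C_mul_monomial, MvPolynomial.monomial_mul]
    simp
  have hinj : ∀ p ∈ St,
      (Finsupp.single (0 : Fin 3) (p.1 + (mx : ℤ)).toNat +
        Finsupp.single (1 : Fin 3) (p.2 + (my : ℤ)).toNat) =
      (Finsupp.single (0 : Fin 3) (p₀.1 + (mx : ℤ)).toNat +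
        Finsupp.single (1 : Fin 3) (p₀.2 + (my : ℤ)).toNat) → p = p₀ := by
    intro p hp heq
    have h0 := DFunLike.congr_fun heq (0 : Fin 3)
    have h1 := DFunLike.congr_fun heq (1 : Fin 3)
    simp only [Finsupp.add_apply, Finsupp.single_eq_same,
      Finsupp.single_eq_of_ne (show (1 : Fin 3) ≠ 0 by decide),
      Finsupp.single_eq_of_ne (show (0 : Fin 3) ≠ 1 by decide),
      add_zero, zero_add] at h0 h1
    have hx0 := hb.lowerX p hp
    have hx1 := hb.lowerX p₀ hp₀
    have hy0 := hb.lowerY p hp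
    have hy1 := hb.lowerY p₀ hp₀
    have e0 : p.1 + (mx : ℤ) = p₀.1 + (mx : ℤ) := by
      rw [← Int.toNat_of_nonneg (show (0:ℤ) ≤ p.1 + (mx : ℤ) by omega),
        ← Int.toNat_of_nonneg (show (0:ℤ) ≤ p₀.1 + (mx : ℤ) by omega), h0]
    have e1 : p.2 + (my : ℤ) = p₀.2 + (my : ℤ) := by
      rw [← Int.toNat_of_nonneg (show (0:ℤ) ≤ p.2 + (my : ℤ) by omega),
        ← Int.toNat_of_nonneg (show (0:ℤ) ≤ p₀.2 + (my : ℤ) by omega), h1]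
    have : p.1 = p₀.1 := by omega
    have h2 : p.2 = p₀.2 := by omega
    exact Prod.ext this h2
  set Q : MvPolynomial (Fin 3) ℂ :=
    ∑ p ∈ St, MvPolynomial.C (w p) *
      MvPolynomial.X 0 ^ (p.1 + (mx : ℤ)).toNat *
      MvPolynomial.X 1 ^ (p.2 + (my : ℤ)).toNat with hQ
  have hQcoeff : MvPolynomial.coeff
      (Finsupp.single (0 : Fin 3) (p₀.1 + (mx : ℤ)).toNat +
        Finsupp.single (1 : Fin 3) (p₀.2 + (my : ℤ)).toNat) Q = w p₀ := by
    rw [hQ, MvPolynomial.coeff_sum]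
    rw [Finset.sum_congr rfl
      (fun p hp => by rw [hmono p hp, MvPolynomial.coeff_monomial])]
    rw [Finset.sum_eq_single_of_mem p₀ hp₀]
    · rw [if_pos rfl]
    · intro p hp hne
      exact if_neg (fun h => hne (hinj p hp h))
  have hQne : Q ≠ 0 := by
    intro h
    apply hset.weight_ne p₀ hp₀
    rw [h, MvPolynomial.coeff_zero] at hQcoeff
    exact hQcoeff.symm
  have hpt : ∃ pt : Fin 3 → ℂ, MvPolynomial.eval pt Q ≠ 0 := by
    by_contra h
    push_neg at h
    apply hQne
    apply MvPolynomial.funext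
    intro pt
    rw [map_zero]
    exact h pt
  obtain ⟨pt, hpt⟩ := hpt
  set u := pt 0 with hu
  set v := pt 1 with hv
  set sval : ℂ := ∑ p ∈ St, w p * u ^ (p.1 + (mx : ℤ)).toNat *
    v ^ (p.2 + (my : ℤ)).toNat with hsval
  have hs : MvPolynomial.eval pt Q = sval := by
    rw [hQ, hsval, map_sum]
    apply Finset.sum_congr rfl
    intro p _
    simp [hu, hv]
  set ψ : MvPolynomial (Fin 3) ℂ →ₐ[ℂ] Polynomial ℂ :=
    MvPolynomial.aeval ![Polynomial.C u, Polynomial.C v, (Polynomial.X : Polynomial ℂ)]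
    with hψ
  have hψQ : ψ Q = Polynomial.C sval := by
    rw [hQ, hsval, map_sum, map_sum]
    apply Finset.sum_congr rfl
    intro p _
    simp [hψ, Polynomial.C_pow, Polynomial.C_mul]
  have hψK : ψ (kernelPoly St w mx my) =
      Polynomial.C (u ^ mx * v ^ my) - Polynomial.X * Polynomial.C sval := by
    rw [kernelPoly, map_sub, map_mul, map_mul]
    rw [show (∑ p ∈ St, MvPolynomial.C (w p) *
        MvPolynomial.X 0 ^ (p.1 + (mx : ℤ)).toNat *
        MvPolynomial.X 1 ^ (p.2 + (my : ℤ)).toNat) = Q from rfl]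
    rw [hψQ]
    simp [hψ, map_pow, Polynomial.C_pow, Polynomial.C_mul]
  have hsne : sval ≠ 0 := by rw [← hs]; exact hpt
  have hdeg := Polynomial.natDegree_eq_zero_of_isUnit (hψK ▸ hunit.map ψ)
  have hform : Polynomial.C (u ^ mx * v ^ my) - Polynomial.X * Polynomial.C sval =
      Polynomial.C (-sval) * Polynomial.X + Polynomial.C (u ^ mx * v ^ my) := by
    rw [map_neg]; ring
  rw [hform, Polynomial.natDegree_linear (neg_ne_zero.mpr hsne)] at hdeg
  exact one_ne_zero hdeg

end Aux17


/-- if the orbit is finite and `(γx, γy)` is a pseudo-decoupling of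
`(x,y)`, then `(x,y)` admits a decoupling `(x,y) = γ̃x + γ̃y + α` with
`γ̃x = [G_x]·γx`, `γ̃y = [G_y]·γy` and `α = (x,y) - γ̃x - γ̃y`. -/
theorem stmt17 {K : Type} [Field K] [Algebra ℂ K]
    (St : Finset (ℤ × ℤ)) (w : ℤ × ℤ → ℂ) (x y : K) (mx my : ℕ)
    (hset : Setting St w x y) (hb : ExponentBounds St mx my)
    (hfin : (orbit St w x y).Finite)
    (gx gy : (K × K) →₀ ℂ)
    (hgx : ↑gx.support ⊆ orbit St w x y) (hgy : ↑gy.support ⊆ orbit St w x y)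
    (hps : PseudoDecoupling St w mx my x y gx gy) :
    IsDecoupling St w mx my x y
      (groupAverage (Gx St w x y) gx) (groupAverage (Gy St w x y) gy)
      (Finsupp.single (x, y) (1 : ℂ) -
        groupAverage (Gx St w x y) gx - groupAverage (Gy St w x y) gy) := by
  haveI hGxfin : Finite ↥(Gx St w x y) := finite_Gx St w x y hfin
  haveI hGyfin : Finite ↥(Gy St w x y) := finite_Gy St w x y hfin
  refine ⟨by abel, ?_, ?_, ?_⟩
  · intro σ hσ
    exact actChain_groupAverage St w x y (Gx St w x y) hGxfin hσ gx
  · intro σ hσ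
    exact actChain_groupAverage St w x y (Gy St w x y) hGyfin hσ gy
  · intro A₁ B₁ A₂ B₂ hA₁ hB₁ hA₂ hB₂ hnd₁ hnd₂
    have hone : ¬ kernelPoly St w mx my ∣ 1 :=
      kernelPoly_not_dvd_one St w x y mx my hset hb
    have hdec₁ : AdmitsDecoupling St w mx my A₁ B₁ :=
      ⟨A₁, B₁, 0, 1, 0, 1, hA₁, hB₁, zero_mem _, one_mem _, hnd₁, hone, hone, by
        simp [toFF]⟩
    have hdec₂ : AdmitsDecoupling St w mx my A₂ B₂ :=
      ⟨0, 1, A₂, B₂, 0, 1, zero_mem _, one_mem _, hA₂, hB₂, hone, hnd₂, hone, by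
        simp [toFF]⟩
    obtain ⟨heq₁, hx₁, hy₁⟩ := hps A₁ B₁ hnd₁ hdec₁
    obtain ⟨heq₂, hx₂, hy₂⟩ := hps A₂ B₂ hnd₂ hdec₂
    set α := Finsupp.single ((x, y) : K × K) (1 : ℂ) -
      groupAverage (Gx St w x y) gx - groupAverage (Gy St w x y) gy with hα
    have hsplit : (α.sum fun a c => algebraMap ℂ K c *
        (fracEval St w x y A₁ B₁ a + fracEval St w x y A₂ B₂ a)) =
        chainEval St w x y A₁ B₁ α + chainEval St w x y A₂ B₂ α := by
      rw [chainEval, chainEval, Finsupp.sum, Finsupp.sum, Finsupp.sum,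
        ← Finset.sum_add_distrib]
      apply Finset.sum_congr rfl
      intro a _
      ring
    have main : ∀ A B : MvPolynomial (Fin 3) ℂ,
        chainEval St w x y A B gx ∈ kxF St w x y →
        chainEval St w x y A B gy ∈ kyF St w x y →
        chainEval St w x y A B α = fracEval St w x y A B (x, y) -
          chainEval St w x y A B gx - chainEval St w x y A B gy := by
      intro A B hkx hky
      have havgx : chainEval St w x y A B (groupAverage (Gx St w x y) gx) =
          chainEval St w x y A B gx := by
        apply chainEval_groupAverage St w x y A B _ hGxfin
        intro σ hσ
        exact chainEval_fix St w x y A B (kxF_le_orbitF St w x y) hσ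
          (inv_mem (S_mem_kxF St w x y)) gx hgx hkx
      have havgy : chainEval St w x y A B (groupAverage (Gy St w x y) gy) =
          chainEval St w x y A B gy := by
        apply chainEval_groupAverage St w x y A B _ hGyfin
        intro σ hσ
        exact chainEval_fix St w x y A B (kyF_le_orbitF St w x y) hσ
          (inv_mem (S_mem_kyF St w x y)) gy hgy hky
      rw [hα, chainEval_eq, map_sub, map_sub, Finsupp.linearCombination_single,
        one_smul, ← chainEval_eq, ← chainEval_eq, havgx, havgy]
    rw [hsplit, main A₁ B₁ hx₁ hy₁, main A₂ B₂ hx₂ hy₂, heq₁, heq₂]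
    ring


end QuadrantWalk
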